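/- Let G be an Eulerian digraph and X₁, X₂ ⊆ V(G) disjoint. The maximum number of pairwise edge-disjoint directed paths from X₁ to X₂ equals the maximum number of pairwise edge-disjoint directed paths from X₂ to X₁. -/

import Mathlib

structure MDigraph where
  V : Type
  E : Type
  [fintV : Fintype V]
  [fintE : Fintype E]
  [decV : DecidableEq V]
  [decE : DecidableEq E]
  tail : E → V
  head : E → V

attribute [instance] MDigraph.fintV MDigraph.fintE MDigraph.decV MDigraph.decE

/-- An Eulerian digraph: every vertex has equal in-degree and out-degree. -/
def MDigraph.Eulerian (G : MDigraph) : Prop :=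
  ∀ v : G.V, Nat.card {e : G.E // G.head e = v} = Nat.card {e : G.E // G.tail e = v}

/-- A directed trail: a nonempty walk without repeated edges. -/
structure MDigraph.Trail (G : MDigraph) : Type where
  edges : List G.E
  nonempty : edges ≠ []
  chain : edges.Chain' (fun e f => G.head e = G.tail f)
  nodup : edges.Nodup

def MDigraph.Trail.first {G : MDigraph} (t : G.Trail) : G.V :=
  G.tail (t.edges.head t.nonempty)

def MDigraph.Trail.last {G : MDigraph} (t : G.Trail) : G.V :=
  G.head (t.edges.getLast t.nonempty)

/-- The internal vertices of a trail, in order. -/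
def MDigraph.Trail.internals {G : MDigraph} (t : G.Trail) : List G.V :=
  t.edges.dropLast.map G.head

/-!
Delete the edges of `k` edge-disjoint trails from `X₁` to `X₂` in an Eulerian digraph. In the
remaining graph, out-degree minus in-degree at `v` is the number of these trails ending at `v`
minus the number starting at `v`: it is nonnegative on `X₂` with total `k` there, and negative
only on `X₁`. Following unused edges from a vertex of positive excess until one gets stuck gives
a trail ending at a vertex of negative excess, and removing it lowers the total excess on `X₂`
by one. Repeating this `k` times yields `k` edge-disjoint trails from `X₂` to `X₁`.
-/

open Finset Function

namespace MDigraph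

variable {G : MDigraph}

def excess (s : Finset G.E) (v : G.V) : ℤ :=
  #{e ∈ s | G.tail e = v} - #{e ∈ s | G.head e = v}

theorem excess_empty (v : G.V) : excess (∅ : Finset G.E) v = 0 := by
  simp [excess]

theorem excess_insert {s : Finset G.E} {e : G.E} (he : e ∉ s) (v : G.V) :
    excess (insert e s) v =
      excess s v + ((if G.tail e = v then 1 else 0) - (if G.head e = v then 1 else 0)) := by
  simp only [excess, filter_insert]
  split_ifs <;> simp [card_insert_of_notMem, he] <;> ring

theorem excess_union {s t : Finset G.E} (h : Disjoint s t) (v : G.V) :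
    excess (s ∪ t) v = excess s v + excess t v := by
  simp only [excess, filter_union, card_union_of_disjoint (disjoint_filter_filter h)]
  push_cast
  ring

theorem excess_sdiff {s t : Finset G.E} (h : t ⊆ s) (v : G.V) :
    excess (s \ t) v = excess s v - excess t v := by
  rw [eq_sub_iff_add_eq, ← excess_union sdiff_disjoint, sdiff_union_of_subset h]

theorem excess_biUnion {ι : Type*} (I : Finset ι) (f : ι → Finset G.E)
    (hf : (I : Set ι).PairwiseDisjoint f) (v : G.V) :
    excess (I.biUnion f) v = ∑ i ∈ I, excess (f i) v := by
  have hfilter (p : G.E → Prop) [DecidablePred p] :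
      (I : Set ι).PairwiseDisjoint fun i => (f i).filter p :=
    fun i hi j hj hij => disjoint_filter_filter (hf hi hj hij)
  simp only [excess, filter_biUnion, card_biUnion (hfilter _), Nat.cast_sum, sum_sub_distrib]

theorem Eulerian.excess_univ (hG : G.Eulerian) (v : G.V) : excess (univ : Finset G.E) v = 0 := by
  have h := hG v
  simp only [Nat.card_eq_fintype_card, Fintype.card_subtype] at h
  simp [excess, h]

theorem excess_toFinset_of_isChain :
    ∀ (l : List G.E) (hl : l ≠ []), l.IsChain (fun e f => G.head e = G.tail f) → l.Nodup →
      ∀ v, excess l.toFinset v =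
        (if G.tail (l.head hl) = v then 1 else 0) - (if G.head (l.getLast hl) = v then 1 else 0)
  | [e], _, _, _, v => by
    rw [List.toFinset_cons, List.toFinset_nil, excess_insert (notMem_empty e), excess_empty]
    exact zero_add _
  | e :: f :: r, _, hc, hnd, v => by
    obtain ⟨hef, hc⟩ := List.isChain_cons_cons.1 hc
    obtain ⟨he, hnd⟩ := List.nodup_cons.1 hnd
    rw [List.toFinset_cons, excess_insert (by simpa using he),
      excess_toFinset_of_isChain (f :: r) (List.cons_ne_nil f r) hc hnd v, List.getLast_cons_cons,
      List.head_cons, List.head_cons, hef]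
    abel

namespace Trail

def edgeFinset (t : G.Trail) : Finset G.E := t.edges.toFinset

theorem excess_edgeFinset (t : G.Trail) (v : G.V) :
    excess t.edgeFinset v = (if t.first = v then 1 else 0) - (if t.last = v then 1 else 0) :=
  excess_toFinset_of_isChain t.edges t.nonempty t.chain t.nodup v

def single (e : G.E) : G.Trail :=
  ⟨[e], List.cons_ne_nil e [], List.isChain_singleton e, List.nodup_singleton e⟩

@[simp] theorem single_last (e : G.E) : (single e).last = G.head e := rfl

@[simp] theorem single_edgeFinset (e : G.E) : (single e).edgeFinset = {e} := rfl

def cons (e : G.E) (t : G.Trail) (h : G.head e = t.first) (he : e ∉ t.edges) : G.Trail :=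
  ⟨e :: t.edges, List.cons_ne_nil _ _,
    List.isChain_cons.2 ⟨fun f hf => by
      rw [List.head?_eq_some_head t.nonempty, Option.mem_some_iff] at hf
      exact hf ▸ h, t.chain⟩,
    List.nodup_cons.2 ⟨he, t.nodup⟩⟩

variable {e : G.E} {t : G.Trail} {h : G.head e = t.first} {he : e ∉ t.edges}

@[simp] theorem cons_last : (cons e t h he).last = t.last :=
  congrArg G.head (List.getLast_cons t.nonempty)

@[simp] theorem cons_edgeFinset : (cons e t h he).edgeFinset = insert e t.edgeFinset :=
  List.toFinset_cons

end Trail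

theorem exists_trail_of_excess_pos (s : Finset G.E) (v : G.V) (hv : 0 < excess s v) :
    ∃ t : G.Trail, t.edgeFinset ⊆ s ∧ t.first = v ∧ excess s t.last < 0 := by
  induction s using Finset.strongInduction generalizing v with
  | H s ih =>
  obtain ⟨e, hes, rfl⟩ : ∃ e ∈ s, G.tail e = v := by
    by_contra! h
    simp only [excess, filter_false_of_mem h, card_empty] at hv
    omega
  have hs (x : G.V) : excess s x = excess (s.erase e) x +
      ((if G.tail e = x then 1 else 0) - (if G.head e = x then 1 else 0)) := by
    rw [← excess_insert (notMem_erase e s), insert_erase hes]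
  by_cases hw : 0 < excess (s.erase e) (G.head e)
  · obtain ⟨t, hts, htw, hlast⟩ := ih _ (erase_ssubset hes) _ hw
    have he : e ∉ t.edges := fun h => notMem_erase e s (hts (List.mem_toFinset.2 h))
    refine ⟨.cons e t htw.symm he, ?_, rfl, ?_⟩
    · simpa using insert_subset hes (hts.trans (erase_subset e s))
    · rw [Trail.cons_last]
      by_cases hu : G.tail e = t.last
      · have h := hs (G.tail e)
        rw [← hu] at hlast
        rw [if_pos rfl] at h
        split_ifs at h <;> omega
      · have h := hs t.last
        rw [if_neg hu] at h
        split_ifs at h <;> omega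
  · -- `e` cannot be a loop, since removing a loop at `v` would leave the surplus of `v` intact
    refine ⟨.single e, by simpa using hes, rfl, ?_⟩
    rw [Trail.single_last]
    have h := hs (G.head e)
    rw [if_pos rfl] at h
    by_cases hloop : G.tail e = G.head e
    · rw [if_pos hloop] at h
      rw [hloop] at hv
      omega
    · rw [if_neg hloop] at h
      omega

theorem _root_.Fin.pairwise_cons {α : Type*} {r : α → α → Prop}
    (hr : ∀ ⦃x y⦄, r x y → r y x) {n : ℕ} {a : α} {f : Fin n → α} (ha : ∀ i, r a (f i)) (hf : Pairwise (r on f)) :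
    Pairwise (r on Fin.cons a f) := by
  intro i j hij
  cases i using Fin.cases <;> cases j using Fin.cases
  · exact absurd rfl hij
  · exact ha _
  · exact hr (ha _)
  · exact hf (fun h => hij (congrArg Fin.succ h))

theorem exists_trails_of_le_sum_excess (A : Finset G.V) (B : Set G.V) (k : ℕ) (s : Finset G.E)
    (hA : ∀ v ∈ A, 0 ≤ excess s v) (hB : ∀ v, excess s v < 0 → v ∈ B)
    (hk : (k : ℤ) ≤ ∑ v ∈ A, excess s v) :
    ∃ P : Fin k → G.Trail, (∀ i, (P i).first ∈ A ∧ (P i).last ∈ B) ∧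
      Pairwise (List.Disjoint on fun i => (P i).edges) ∧ ∀ i, (P i).edgeFinset ⊆ s := by
  induction k generalizing s with
  | zero => exact ⟨Fin.elim0, fun i => i.elim0, fun i => i.elim0, fun i => i.elim0⟩
  | succ k ih =>
  obtain ⟨v, hvA, hv⟩ : ∃ v ∈ A, 0 < excess s v :=
    exists_lt_of_sum_lt (by rw [sum_const_zero]; omega)
  obtain ⟨t, hts, rfl, hlast⟩ := exists_trail_of_excess_pos s v hv
  have hlastA : t.last ∉ A := fun h => (hA _ h).not_gt hlast
  have hs' (w : G.V) : excess (s \ t.edgeFinset) w = excess s w -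
      ((if t.first = w then 1 else 0) - (if t.last = w then 1 else 0)) := by
    rw [excess_sdiff hts, t.excess_edgeFinset]
  obtain ⟨Q, hQ, hQd, hQs⟩ := ih (s \ t.edgeFinset) (fun w hw => by
      rw [hs', if_neg (ne_of_mem_of_not_mem hw hlastA).symm]
      split_ifs with h
      · exact h ▸ (by omega)
      · simpa using hA w hw)
    (fun w hw => by
      by_cases hu : t.last = w
      · exact hu ▸ hB _ hlast
      · rw [hs', if_neg hu] at hw
        split_ifs at hw with h
        · exact absurd (h ▸ hv) (by omega)
        · exact hB w (by simpa using hw))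
    (by
      simp only [hs', sum_sub_distrib, sum_ite_eq, if_pos hvA, if_neg hlastA]
      push_cast at hk
      omega)
  have htQ (i : Fin k) : t.edges.Disjoint (Q i).edges := fun e ht hQi =>
    (mem_sdiff.1 (hQs i (List.mem_toFinset.2 hQi))).2 (List.mem_toFinset.2 ht)
  refine ⟨Fin.cons t Q, fun i => ?_,
    Fin.pairwise_cons (r := List.Disjoint on Trail.edges) (fun _ _ h => h.symm) htQ hQd,
    fun i => ?_⟩
  · cases i using Fin.cases
    · exact ⟨hvA, hB _ hlast⟩
    · exact hQ _
  · cases i using Fin.cases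
    · exact hts
    · exact (hQs _).trans sdiff_subset

theorem Eulerian.excess_compl_biUnion (hG : G.Eulerian) {ι : Type*} [Fintype ι]
    (P : ι → G.Trail) (hP : Pairwise (List.Disjoint on fun i => (P i).edges)) (v : G.V) :
    excess (univ \ univ.biUnion fun i => (P i).edgeFinset) v =
      ∑ i, ((if (P i).last = v then 1 else 0) - (if (P i).first = v then 1 else 0)) := by
  rw [excess_sdiff (subset_univ _), hG.excess_univ,
    excess_biUnion univ (fun i => (P i).edgeFinset)
      fun i _ j _ hij => List.disjoint_toFinset_iff_disjoint.2 (hP hij)]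
  simp only [Trail.excess_edgeFinset, zero_sub, ← sum_neg_distrib, neg_sub]

theorem Eulerian.exists_reverse_trails (hG : G.Eulerian) {X₁ X₂ : Set G.V}
    (hdisj : Disjoint X₁ X₂) {k : ℕ} (P : Fin k → G.Trail)
    (hP : ∀ i, (P i).first ∈ X₁ ∧ (P i).last ∈ X₂)
    (hPd : Pairwise (List.Disjoint on fun i => (P i).edges)) :
    ∃ Q : Fin k → G.Trail, (∀ i, (Q i).first ∈ X₂ ∧ (Q i).last ∈ X₁) ∧
      Pairwise (List.Disjoint on fun i => (Q i).edges) := by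
  classical
  have hex := hG.excess_compl_biUnion P hPd
  have hfirst (i : Fin k) : (P i).first ∉ X₂ := Set.disjoint_left.1 hdisj (hP i).1
  obtain ⟨Q, hQ, hQd, -⟩ := exists_trails_of_le_sum_excess X₂.toFinset X₁ k _
    (fun v hv => by
      rw [hex]
      refine sum_nonneg fun i _ => ?_
      rw [if_neg fun h : (P i).first = v => hfirst i (h ▸ Set.mem_toFinset.1 hv)]
      split_ifs <;> norm_num)
    (fun v hv => by
      rw [hex] at hv
      obtain ⟨i, -, hi⟩ := exists_lt_of_sum_lt (hv.trans_eq sum_const_zero.symm)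
      by_contra hvX
      rw [if_neg fun h : (P i).first = v => hvX (h ▸ (hP i).1)] at hi
      split_ifs at hi <;> norm_num at hi)
    (by
      rw [sum_congr rfl fun v _ => hex v, sum_comm]
      simp [sum_sub_distrib, sum_ite_eq, (hP _).2, hfirst])
  exact ⟨Q, fun i => ⟨Set.mem_toFinset.1 (hQ i).1, (hQ i).2⟩, hQd⟩

end MDigraph

theorem stmt3 (G : MDigraph) (hG : G.Eulerian) (X₁ X₂ : Set G.V)
    (hdisj : Disjoint X₁ X₂) :
    sSup {n : ℕ | ∃ P : Fin n → G.Trail,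
        (∀ i, (P i).first ∈ X₁ ∧ (P i).last ∈ X₂) ∧
        ∀ i j, i ≠ j → (P i).edges.Disjoint (P j).edges}
      = sSup {n : ℕ | ∃ P : Fin n → G.Trail,
        (∀ i, (P i).first ∈ X₂ ∧ (P i).last ∈ X₁) ∧
        ∀ i j, i ≠ j → (P i).edges.Disjoint (P j).edges} := by
  congr 1
  ext n
  exact ⟨fun ⟨P, hP, hPd⟩ => hG.exists_reverse_trails hdisj P hP hPd,
    fun ⟨P, hP, hPd⟩ => hG.exists_reverse_trails hdisj.symm P hP hPd⟩
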